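/- arXiv:2212.11942 — 3 statements merged into one kernel-verified Lean document; each statement's English description precedes it below -/
import Mathlib

section
/- Let f : ⊕_{i∈I} ℚ → A be an injective homomorphism of abelian groups and g : A → B a homomorphism with countable kernel, where I is uncountable. Then there exists a subset J ⊆ I with the same cardinality as I such that the restriction of g ∘ f to ⊕_{j∈J} ℚ is injective. -/
/-! Let `S ⊆ I` be the union of the supports of the elements of `ker (g ∘ f) = f⁻¹(ker g)`,
a countable set of finitely supported vectors. Then `S` is countable, so its complement has
the cardinality of `I`, and a nonzero difference `x - y` supported off `S` cannot lie in the
kernel. -/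

theorem Cardinal.mk_compl_of_countable {α : Type*} [Uncountable α] {s : Set α}
    (hs : s.Countable) : Cardinal.mk ↥sᶜ = Cardinal.mk α :=
  Cardinal.mk_compl_of_infinite s <|
    (Cardinal.mk_le_aleph0_iff.2 hs.to_subtype).trans_lt Cardinal.aleph0_lt_mk

namespace Finsupp

variable {ι M B : Type*} [AddCommGroup M] [AddCommGroup B]

theorem countable_biUnion_support {K : Set (ι →₀ M)} (hK : K.Countable) :
    (⋃ x ∈ K, (x.support : Set ι)).Countable :=
  hK.biUnion fun x _ => x.support.countable_toSet

theorem injOn_supported_of_disjoint_ker (φ : (ι →₀ M) →+ B) {J : Set ι}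
    (hJ : ∀ x ∈ φ.ker, Disjoint (x.support : Set ι) J) :
    Set.InjOn φ {x | ↑x.support ⊆ J} := by
  classical
  intro x hx y hy hxy
  have hker : x - y ∈ φ.ker := by
    rw [AddMonoidHom.mem_ker, map_sub, hxy, sub_self]
  have hsupp : ((x - y).support : Set ι) ⊆ J :=
    (Finset.coe_subset.2 support_sub).trans <| by
      rw [Finset.coe_union]; exact Set.union_subset hx hy
  have hzero : (x - y).support = ∅ :=
    Finset.coe_eq_empty.1 <| (hJ _ hker).eq_bot_of_le hsupp
  exact sub_eq_zero.1 (support_eq_empty.1 hzero)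

end Finsupp

/-- If `f : ⊕_I ℚ → A` is injective and `g : A → B` has countable kernel, with `I`
uncountable, then there is `J ⊆ I` of the same cardinality as `I` such that `g ∘ f` is
injective on the sub-direct-sum of summands indexed by `J`. -/
theorem restrict_injective_of_countable_kernel {I : Type*} [Uncountable I]
    {A B : Type*} [AddCommGroup A] [AddCommGroup B]
    (f : (I →₀ ℚ) →+ A) (hf : Function.Injective f)
    (g : A →+ B) (hg : (g.ker : Set A).Countable) :
    ∃ J : Set I, Cardinal.mk J = Cardinal.mk I ∧
      Set.InjOn (g.comp f) {x : I →₀ ℚ | ↑x.support ⊆ J} := by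
  have hker : ((g.comp f).ker : Set (I →₀ ℚ)).Countable := hg.preimage hf
  set S := ⋃ x ∈ (g.comp f).ker, (x.support : Set I)
  refine ⟨Sᶜ, Cardinal.mk_compl_of_countable (Finsupp.countable_biUnion_support hker), ?_⟩
  exact Finsupp.injOn_supported_of_disjoint_ker _ fun x hx =>
    Set.disjoint_compl_right_iff_subset.2 <|
      Set.subset_biUnion_of_mem (u := fun x => (x.support : Set I)) hx
end

section
/- Suppose E is a Hausdorff topological space with a basis of clopen sets. If two points x, y ∈ E admit open neighbourhoods U ∋ x and V ∋ y with a homeomorphism U → V sending x to y, then there is a homeomorphism of E onto itself sending x to y. -/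
open Classical in
/-- Swap `A` and `D` via `φ`, identity elsewhere. -/
noncomputable def pieceMap {E : Type*} [TopologicalSpace E] {U V : Set E} (φ : U ≃ₜ V)
    (A D : Set E) (hAU : A ⊆ U) (hDV : D ⊆ V) : E → E := fun z =>
  if hz : z ∈ A then (φ ⟨z, hAU hz⟩ : E)
  else if hz' : z ∈ D then (φ.symm ⟨z, hDV hz'⟩ : E) else z

/-- In a Hausdorff space with a basis of clopen sets, locally similar points are
globally similar. -/
theorem similar_implies_globally_similar {E : Type*} [TopologicalSpace E] [T2Space E]
    (hbasis : ∃ B : Set (Set E), (∀ s ∈ B, IsClopen s) ∧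
      TopologicalSpace.IsTopologicalBasis B)
    (x y : E) (U V : Set E) (hU : IsOpen U) (hV : IsOpen V)
    (hx : x ∈ U) (hy : y ∈ V) (φ : U ≃ₜ V) (hφ : φ ⟨x, hx⟩ = ⟨y, hy⟩) :
    ∃ ψ : E ≃ₜ E, ψ x = y := by
  obtain ⟨Bs, hBclopen, hBbasis⟩ := hbasis
  by_cases hxy : x = y
  · exact ⟨Homeomorph.refl E, hxy⟩
  -- clopen C with x ∈ C ⊆ U \ {y}
  obtain ⟨C, hCB, hxC, hCsub⟩ := hBbasis.exists_subset_of_mem_open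
    (show x ∈ U ∩ {y}ᶜ from ⟨hx, hxy⟩) (hU.inter isOpen_compl_singleton)
  have hCclop := hBclopen C hCB
  have hCU : C ⊆ U := fun z hz => (hCsub hz).1
  have hyC : y ∉ C := fun h => (hCsub h).2 rfl
  -- the image of C under φ, as an open subset of E
  set W : Set E := Subtype.val '' ((fun v : V => (φ.symm v : E)) ⁻¹' C) with hW
  have hWV : W ⊆ V := by rintro _ ⟨v, -, rfl⟩; exact v.2
  have hWopen : IsOpen W := hV.isOpenMap_subtype_val _
    (hCclop.isOpen.preimage (continuous_subtype_val.comp φ.symm.continuous))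
  have hyW : y ∈ W := by
    refine ⟨⟨y, hy⟩, ?_, rfl⟩
    show (φ.symm ⟨y, hy⟩ : E) ∈ C
    rw [← hφ, Homeomorph.symm_apply_apply]; exact hxC
  -- clopen D with y ∈ D ⊆ W \ C
  obtain ⟨D, hDB, hyD, hDsub⟩ := hBbasis.exists_subset_of_mem_open
    (show y ∈ W ∩ Cᶜ from ⟨hyW, hyC⟩) (hWopen.inter hCclop.compl.isOpen)
  have hDclop := hBclopen D hDB
  have hDV : D ⊆ V := fun z hz => hWV (hDsub hz).1
  have hDC : ∀ z ∈ D, z ∉ C := fun z hz => (hDsub hz).2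
  -- A = φ ⁻¹ D
  set A : Set E := Subtype.val '' ((fun u : U => (φ u : E)) ⁻¹' D) with hA
  have hAC : A ⊆ C := by
    rintro _ ⟨u, hu, rfl⟩
    obtain ⟨v, hv, hvu⟩ := (hDsub hu).1
    have hveq : v = φ u := Subtype.ext hvu
    rw [hveq] at hv
    have hv' : (φ.symm (φ u) : E) ∈ C := hv
    rw [Homeomorph.symm_apply_apply] at hv'
    exact hv'
  have hAU : A ⊆ U := fun z hz => hCU (hAC hz)
  have hxA : x ∈ A := ⟨⟨x, hx⟩, show (φ ⟨x, hx⟩ : E) ∈ D by rw [hφ]; exact hyD, rfl⟩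
  have hAopen : IsOpen A := hU.isOpenMap_subtype_val _
    (hDclop.isOpen.preimage (continuous_subtype_val.comp φ.continuous))
  have hAclosed : IsClosed A := by
    have hcompl : Aᶜ = Cᶜ ∪
        Subtype.val '' (Subtype.val ⁻¹' C ∩ (fun u : U => (φ u : E)) ⁻¹' Dᶜ) := by
      ext z
      constructor
      · intro hz
        by_cases hzC : z ∈ C
        · exact Or.inr ⟨⟨z, hCU hzC⟩, ⟨hzC, fun hd => hz ⟨⟨z, hCU hzC⟩, hd, rfl⟩⟩, rfl⟩
        · exact Or.inl hzC
      · rintro (hzC | ⟨u, ⟨huC, huD⟩, rfl⟩)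
        · exact fun hzA => hzC (hAC hzA)
        · rintro ⟨u', hu', huu'⟩
          have : u' = u := Subtype.ext huu'
          rw [this] at hu'
          exact huD hu'
    rw [← isOpen_compl_iff, hcompl]
    exact hCclop.compl.isOpen.union (hU.isOpenMap_subtype_val _
      ((hCclop.isOpen.preimage continuous_subtype_val).inter
        (hDclop.compl.isOpen.preimage (continuous_subtype_val.comp φ.continuous))))
  have hAD : ∀ z, z ∈ A → z ∉ D := fun z hz hd => hDC z hd (hAC hz)
  have hmapA : ∀ z (hz : z ∈ A), (φ ⟨z, hAU hz⟩ : E) ∈ D := by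
    intro z hz
    obtain ⟨u, hu, huz⟩ := id hz
    have : (⟨z, hAU hz⟩ : U) = u := Subtype.ext huz.symm
    rw [this]
    exact hu
  have hmapD : ∀ z (hz : z ∈ D), (φ.symm ⟨z, hDV hz⟩ : E) ∈ A := fun z hz =>
    ⟨φ.symm ⟨z, hDV hz⟩, show (φ (φ.symm ⟨z, hDV hz⟩) : E) ∈ D by
      rw [Homeomorph.apply_symm_apply]; exact hz, rfl⟩
  set f : E → E := pieceMap φ A D hAU hDV with hfdef
  have hfA : ∀ z (hz : z ∈ A), f z = (φ ⟨z, hAU hz⟩ : E) := fun z hz => dif_pos hz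
  have hfD : ∀ z (hz : z ∈ D), f z = (φ.symm ⟨z, hDV hz⟩ : E) := fun z hz =>
    ((dif_neg (fun h => hAD z h hz)).trans (dif_pos hz))
  have hfE : ∀ z, z ∉ A → z ∉ D → f z = z := fun z hz hz' =>
    ((dif_neg hz).trans (dif_neg hz'))
  have hff : ∀ z, f (f z) = z := by
    intro z
    by_cases hz : z ∈ A
    · rw [hfA z hz, hfD _ (hmapA z hz)]
      have : (⟨(φ ⟨z, hAU hz⟩ : E), hDV (hmapA z hz)⟩ : V) = φ ⟨z, hAU hz⟩ :=
        Subtype.ext rfl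
      rw [this, Homeomorph.symm_apply_apply]
    · by_cases hz' : z ∈ D
      · rw [hfD z hz', hfA _ (hmapD z hz')]
        have : (⟨(φ.symm ⟨z, hDV hz'⟩ : E), hAU (hmapD z hz')⟩ : U) = φ.symm ⟨z, hDV hz'⟩ :=
          Subtype.ext rfl
        rw [this, Homeomorph.apply_symm_apply]
      · rw [hfE z hz hz', hfE z hz hz']
  have hcont : Continuous f := by
    have hcA : ContinuousOn f A := by
      rw [continuousOn_iff_continuous_restrict]
      have : A.domRestrict f = fun a : A => (φ ⟨a.1, hAU a.2⟩ : E) :=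
        funext fun a => hfA a.1 a.2
      rw [this]
      exact continuous_subtype_val.comp
        (φ.continuous.comp (continuous_subtype_val.subtype_mk _))
    have hcD : ContinuousOn f D := by
      rw [continuousOn_iff_continuous_restrict]
      have : D.domRestrict f = fun a : D => (φ.symm ⟨a.1, hDV a.2⟩ : E) :=
        funext fun a => hfD a.1 a.2
      rw [this]
      exact continuous_subtype_val.comp
        (φ.symm.continuous.comp (continuous_subtype_val.subtype_mk _))
    have hcE : ContinuousOn f (A ∪ D)ᶜ := by
      rw [continuousOn_iff_continuous_restrict]
      have : (A ∪ D)ᶜ.domRestrict f = fun a : ((A ∪ D)ᶜ : Set E) => (a.1 : E) :=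
        funext fun a => hfE a.1 (fun h => a.2 (Or.inl h)) (fun h => a.2 (Or.inr h))
      rw [this]
      exact continuous_subtype_val
    rw [continuous_iff_continuousAt]
    intro z
    by_cases hz : z ∈ A
    · exact hcA.continuousAt (hAopen.mem_nhds hz)
    · by_cases hz' : z ∈ D
      · exact hcD.continuousAt (hDclop.isOpen.mem_nhds hz')
      · exact hcE.continuousAt ((hAclosed.union hDclop.isClosed).isOpen_compl.mem_nhds
          (fun h => h.elim hz hz'))
  refine ⟨⟨⟨f, f, hff, hff⟩, hcont, hcont⟩, ?_⟩
  show f x = y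
  rw [hfA x hxA]
  have : (⟨x, hAU hxA⟩ : U) = ⟨x, hx⟩ := rfl
  rw [this, hφ]
end

section
/- Let E be a topological space possessing a topologically distinguished point, i.e. a point x such that no other point y ≠ x has an open neighbourhood homeomorphic as a pointed space to some open neighbourhood of x. Then in the one-point compactification of a countably infinite disjoint union of copies of E, the point at infinity is fixed by every self-homeomorphism. -/
open OnePoint

/-- Two points of (possibly different) topological spaces are *similar* if there is a
homeomorphism of pointed open neighbourhoods taking one to the other. -/
def PointedSimilar {E F : Type*} [TopologicalSpace E] [TopologicalSpace F]
    (x : E) (y : F) : Prop :=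
  ∃ (U : Set E) (V : Set F) (_ : IsOpen U) (_ : IsOpen V) (hx : x ∈ U) (hy : y ∈ V)
    (φ : U ≃ₜ V), φ ⟨x, hx⟩ = ⟨y, hy⟩

open Topology Set

lemma pointedSimilar_of_partialHomeomorph {E F : Type*} [TopologicalSpace E]
    [TopologicalSpace F] (p : OpenPartialHomeomorph E F) {x : E} (hx : x ∈ p.source) :
    PointedSimilar x (p x) :=
  ⟨p.source, p.target, p.open_source, p.open_target, hx, p.map_source hx,
    p.toHomeomorphSourceTarget, rfl⟩

lemma pointedSimilar_iff {E F : Type*} [TopologicalSpace E] [TopologicalSpace F]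
    {x : E} {y : F} :
    PointedSimilar x y ↔ ∃ p : OpenPartialHomeomorph E F, x ∈ p.source ∧ p x = y := by
  constructor
  · rintro ⟨U, V, hU, hV, hxU, hyV, φ, hφ⟩
    have : Nonempty U := ⟨⟨x, hxU⟩⟩
    have : Nonempty V := ⟨⟨y, hyV⟩⟩
    set e1 := hU.isOpenEmbedding_subtypeVal.toOpenPartialHomeomorph _ with he1
    set e2 := hV.isOpenEmbedding_subtypeVal.toOpenPartialHomeomorph _ with he2
    refine ⟨e1.symm.trans (φ.toOpenPartialHomeomorph.trans e2), ?_, ?_⟩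
    · rw [OpenPartialHomeomorph.trans_source]
      constructor
      · show x ∈ e1.symm.source
        rw [OpenPartialHomeomorph.symm_source, he1,
          Topology.IsOpenEmbedding.toOpenPartialHomeomorph_target]
        exact ⟨⟨x, hxU⟩, rfl⟩
      · show e1.symm x ∈ (φ.toOpenPartialHomeomorph.trans e2).source
        simp [OpenPartialHomeomorph.trans_source, he2]
    · have h1 : e1.symm x = ⟨x, hxU⟩ := by
        have := hU.isOpenEmbedding_subtypeVal.toOpenPartialHomeomorph_left_inv
          (f := (Subtype.val : U → E)) (x := ⟨x, hxU⟩)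
        simpa [he1] using this
      simp [OpenPartialHomeomorph.trans_apply, h1, hφ, he2]
  · rintro ⟨p, hxp, rfl⟩
    exact pointedSimilar_of_partialHomeomorph p hxp

lemma PointedSimilar.symm {E F : Type*} [TopologicalSpace E] [TopologicalSpace F]
    {x : E} {y : F} (h : PointedSimilar x y) : PointedSimilar y x := by
  rw [pointedSimilar_iff] at h ⊢
  obtain ⟨p, hxp, rfl⟩ := h
  exact ⟨p.symm, p.map_source hxp, p.left_inv hxp⟩

lemma PointedSimilar.trans {E F G : Type*} [TopologicalSpace E] [TopologicalSpace F]
    [TopologicalSpace G] {x : E} {y : F} {z : G}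
    (h : PointedSimilar x y) (h' : PointedSimilar y z) : PointedSimilar x z := by
  rw [pointedSimilar_iff] at h h' ⊢
  obtain ⟨p, hxp, rfl⟩ := h
  obtain ⟨q, hyq, rfl⟩ := h'
  exact ⟨p.trans q, ⟨hxp, hyq⟩, rfl⟩

lemma pointedSimilar_of_isOpenEmbedding {E F : Type*} [TopologicalSpace E]
    [TopologicalSpace F] {f : E → F} (hf : IsOpenEmbedding f) (x : E) :
    PointedSimilar x (f x) := by
  have : Nonempty E := ⟨x⟩
  rw [pointedSimilar_iff]
  exact ⟨hf.toOpenPartialHomeomorph f, mem_univ x, congrFun (hf.toOpenPartialHomeomorph_apply f) x⟩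

lemma isOpenEmbedding_prodMk {E : Type*} [TopologicalSpace E] (m : ℕ) :
    IsOpenEmbedding (Prod.mk m : E → ℕ × E) := by
  constructor
  · exact isEmbedding_prodMkRight m
  · have : range (Prod.mk m : E → ℕ × E) = Prod.fst ⁻¹' {m} := by
      ext ⟨a, b⟩
      simp [eq_comm]
    rw [this]
    exact (isOpen_discrete _).preimage continuous_fst

/-- If `E` has a topologically distinguished point, then the point at infinity of the
one-point compactification of `E⋅ω = ℕ × E` is fixed by every self-homeomorphism. -/
theorem infty_fixed_of_top_distinguished {E : Type*} [TopologicalSpace E]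
    (x : E) (hx : ∀ y : E, PointedSimilar x y → y = x)
    (ψ : OnePoint (ℕ × E) ≃ₜ OnePoint (ℕ × E)) :
    ψ ∞ = ∞ := by
  by_contra hinf
  -- ψ ∞ = coe (n₀, e₀)
  obtain ⟨⟨n₀, e₀⟩, hn₀⟩ : ∃ z : ℕ × E, ψ ∞ = (z : OnePoint (ℕ × E)) := by
    cases h : ψ ∞ with
    | infty => exact absurd h hinf
    | coe z => exact ⟨z, rfl⟩
  -- ψ.symm ∞ = coe (m₀, e₁)
  obtain ⟨⟨m₀, e₁⟩, hm₀⟩ : ∃ z : ℕ × E, ψ.symm ∞ = (z : OnePoint (ℕ × E)) := by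
    cases h : ψ.symm ∞ with
    | infty =>
        exfalso; apply hinf
        have := congrArg ψ h
        simpa using this.symm
    | coe z => exact ⟨z, rfl⟩
  -- key: for m ≠ m₀, ψ (coe (m, x)) = coe (k, x) for some k
  have key : ∀ m : ℕ, m ≠ m₀ → ∃ k : ℕ, ψ ((m, x) : ℕ × E) = (((k, x) : ℕ × E) : OnePoint (ℕ × E)) := by
    intro m hm
    obtain ⟨⟨k, y⟩, hky⟩ : ∃ z : ℕ × E, ψ ((m, x) : ℕ × E) = (z : OnePoint (ℕ × E)) := by
      cases h : ψ ((m, x) : ℕ × E) with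
      | infty =>
          exfalso
          have h2 : ((m, x) : OnePoint (ℕ × E)) = ψ.symm ∞ := by
            rw [← h]; simp
          rw [hm₀] at h2
          exact hm (congrArg Prod.fst (coe_injective h2))
      | coe z => exact ⟨z, rfl⟩
    refine ⟨k, ?_⟩
    have hsim : PointedSimilar x y := by
      have s1 : PointedSimilar x ((m, x) : ℕ × E) :=
        pointedSimilar_of_isOpenEmbedding (isOpenEmbedding_prodMk m) x
      have s2 : PointedSimilar ((m, x) : ℕ × E) (((m, x) : ℕ × E) : OnePoint (ℕ × E)) :=
        pointedSimilar_of_isOpenEmbedding isOpenEmbedding_coe _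
      have s3 : PointedSimilar (((m, x) : ℕ × E) : OnePoint (ℕ × E))
          (ψ (((m, x) : ℕ × E) : OnePoint (ℕ × E))) := by
        rw [pointedSimilar_iff]
        exact ⟨ψ.toOpenPartialHomeomorph, by simp, rfl⟩
      rw [hky] at s3
      have s4 : PointedSimilar ((k, y) : ℕ × E) (((k, y) : ℕ × E) : OnePoint (ℕ × E)) :=
        pointedSimilar_of_isOpenEmbedding isOpenEmbedding_coe _
      have s5 : PointedSimilar y ((k, y) : ℕ × E) :=
        pointedSimilar_of_isOpenEmbedding (isOpenEmbedding_prodMk k) y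
      exact ((((s1.trans s2).trans s3).trans s4.symm).trans s5.symm)
    rw [hky, hx y hsim]
  -- the open neighbourhood of ψ ∞
  set T : Set (OnePoint (ℕ × E)) := ((↑) : ℕ × E → OnePoint (ℕ × E)) '' (Prod.fst ⁻¹' {n₀}) with hT
  have hTopen : IsOpen T := isOpenEmbedding_coe.isOpenMap _
    ((isOpen_discrete _).preimage continuous_fst)
  set W : Set (OnePoint (ℕ × E)) := ψ ⁻¹' T with hW
  have hWopen : IsOpen W := hTopen.preimage ψ.continuous
  have hinfW : ∞ ∈ W := by
    simp only [hW, mem_preimage, hn₀, hT]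
    exact mem_image_of_mem _ rfl
  obtain ⟨-, hKcompact⟩ := (isOpen_iff_of_mem hinfW).mp hWopen
  -- the set of "bad" indices is finite
  have hFfin : (Prod.fst '' ((((↑) : ℕ × E → OnePoint (ℕ × E)) ⁻¹' W)ᶜ)).Finite :=
    (hKcompact.image continuous_fst).finite_of_discrete
  set F : Set ℕ := (Prod.fst '' ((((↑) : ℕ × E → OnePoint (ℕ × E)) ⁻¹' W)ᶜ)) ∪ {m₀} with hF
  have hFfin' : F.Finite := hFfin.union (finite_singleton m₀)
  obtain ⟨m₁, hm₁⟩ := hFfin'.infinite_compl.nonempty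
  obtain ⟨m₂, hm₂⟩ := (hFfin'.union (finite_singleton m₁)).infinite_compl.nonempty
  have hm₂F : m₂ ∉ F := fun h => hm₂ (Or.inl h)
  have hne : m₂ ≠ m₁ := fun h => hm₂ (Or.inr (by simp [h]))
  -- both copies map into T
  have hmem : ∀ m : ℕ, m ∉ F → ψ ((m, x) : ℕ × E) ∈ T := by
    intro m hm
    have : ((m, x) : ℕ × E) ∈ ((↑) : ℕ × E → OnePoint (ℕ × E)) ⁻¹' W := by
      by_contra h
      exact hm (Or.inl ⟨(m, x), h, rfl⟩)
    exact this
  have h1 : m₁ ∉ F := hm₁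
  obtain ⟨k₁, hk₁⟩ := key m₁ (fun h => h1 (Or.inr (by simp [h])))
  obtain ⟨k₂, hk₂⟩ := key m₂ (fun h => hm₂F (Or.inr (by simp [h])))
  have hT₁ := hmem m₁ h1
  have hT₂ := hmem m₂ hm₂F
  rw [hk₁] at hT₁
  rw [hk₂] at hT₂
  -- extract first coordinates
  have e₁ : k₁ = n₀ := by
    obtain ⟨⟨a, b⟩, ha, hab⟩ := hT₁
    have h3 : a = k₁ := congrArg Prod.fst (coe_injective hab)
    subst h3
    exact ha
  have e₂ : k₂ = n₀ := by
    obtain ⟨⟨a, b⟩, ha, hab⟩ := hT₂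
    have h3 : a = k₂ := congrArg Prod.fst (coe_injective hab)
    subst h3
    exact ha
  have : ψ ((m₁, x) : ℕ × E) = ψ ((m₂, x) : ℕ × E) := by
    rw [hk₁, hk₂, e₁, e₂]
  have := coe_injective (ψ.injective this)
  exact hne.symm (congrArg Prod.fst this)
end
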